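/- Let V and W be 1-Lipschitz vineyard modules over [t₀, t₁] over a field K. Suppose there are support sets S_t ⊆ {1,…,N} and, for each t and each i ∈ S_t, real numbers b_i(t) < d_i(t), together with families of extended bases (B_t^V)_{t} of the V_t and (B_t^W)_{t} of the W_t, each of common size N, such that for every t the i-th element of B_t^V and the i-th element of B_t^W are basis elements with birth b_i(t) and death d_i(t) when i ∈ S_t and are the zero element when i ∉ S_t, and such that for all t₀ ≤ s < t ≤ t₁ one has Mat_{B_s^V}^{B_t^V}(α_V^{s→t}) = Mat_{B_s^W}^{B_t^W}(α_W^{s→t}) and Mat_{B_t^V}^{B_s^V}(β_V^{t→s}) = Mat_{B_t^W}^{B_s^W}(β_W^{t→s}). Then V and W are isomorphic as vineyard modules: the family of maps ρ_t : V_t → W_t determined by Mat_{B_t^V}^{B_t^W}(ρ_t) = π_{S_t} (the diagonal matrix with entry 1 at each index in S_t and 0 elsewhere) is an invertible morphism of vineyard modules. -/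

import Mathlib

open scoped BigOperators

universe u v

/-- A persistence module over a field `K`. -/
structure PersistenceModule (K : Type u) [Field K] where
  space : ℝ → Type v
  [instAdd : ∀ t, AddCommGroup (space t)]
  [instMod : ∀ t, Module K (space t)]
  trans : ∀ s t : ℝ, s ≤ t → (space s →ₗ[K] space t)
  trans_self : ∀ (t : ℝ) (h : t ≤ t), trans t t h = LinearMap.id
  trans_trans : ∀ (r s t : ℝ) (hrs : r ≤ s) (hst : s ≤ t) (x : space r),
      trans s t hst (trans r s hrs x) = trans r t (hrs.trans hst) x

attribute [instance] PersistenceModule.instAdd PersistenceModule.instMod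

namespace PersistenceModule

variable {K : Type u} [Field K]

/-- `x ∈ X_t` is born at `t` if it is not in the image of any earlier transition map. -/
def BornAt (X : PersistenceModule K) (t : ℝ) (x : X.space t) : Prop :=
  ∀ (s : ℝ) (h : s < t), x ∉ Set.range (X.trans s t h.le)

/-- The death time of an element `x ∈ X_t`. -/
noncomputable def death (X : PersistenceModule K) (t : ℝ) (x : X.space t) : ℝ :=
  sInf {s : ℝ | ∃ h : t < s, X.trans t s h.le x = 0}

/-- `x` is a basis of `X` realizing the intervals `[b i, d i)`. -/
def IsBasisFamily {ι : Type*} (X : PersistenceModule K) (b d : ι → ℝ)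
    (x : ∀ i, X.space (b i)) : Prop :=
  (∀ i, X.BornAt (b i) (x i)) ∧
  (∀ i, X.death (b i) (x i) = d i) ∧
  (∀ t : ℝ,
    LinearIndependent K
      (fun i : {i : ι // b i ≤ t ∧ t < d i} => X.trans (b i.1) t i.2.1 (x i.1)) ∧
    Submodule.span K (Set.range
      (fun i : {i : ι // b i ≤ t ∧ t < d i} => X.trans (b i.1) t i.2.1 (x i.1))) = ⊤)

open scoped Classical in
/-- The image of the basis element `x j` at height `h` (or `0` if not yet born). -/
noncomputable def pushTo {ι : Type*} (X : PersistenceModule K) (b : ι → ℝ)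
    (x : ∀ i, X.space (b i)) (h : ℝ) (j : ι) : X.space h :=
  if hb : b j ≤ h then X.trans (b j) h hb (x j) else 0

end PersistenceModule

/-- An `ε`-morphism of persistence modules. -/
structure EpsMorphism {K : Type u} [Field K] (X Y : PersistenceModule K) (ε : ℝ) where
  maps : ∀ r r' : ℝ, r + ε = r' → (X.space r →ₗ[K] Y.space r')
  comm : ∀ (s t s' t' : ℝ) (hs : s + ε = s') (ht : t + ε = t') (hst : s ≤ t)
      (x : X.space s),
    maps t t' ht (X.trans s t hst x) = Y.trans s' t' (by linarith) (maps s s' hs x)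

/-- A pair of `ε`-morphisms forming an `ε`-interleaving. -/
def IsInterleaving {K : Type u} [Field K] (X Y : PersistenceModule K) (ε : ℝ)
    (F : EpsMorphism X Y ε) (G : EpsMorphism Y X ε) : Prop :=
  (∀ (r r'' : ℝ) (h : r + ε + ε = r'') (hr : r ≤ r'') (x : X.space r),
      G.maps (r + ε) r'' (by linarith) (F.maps r (r + ε) rfl x) = X.trans r r'' hr x) ∧
  (∀ (r r'' : ℝ) (h : r + ε + ε = r'') (hr : r ≤ r'') (y : Y.space r),
      F.maps (r + ε) r'' (by linarith) (G.maps r (r + ε) rfl y) = Y.trans r r'' hr y)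

/-- `A` is the matrix of the `ε`-morphism `α` with respect to the bases `x` of `X`
(realizing `[bX i, dX i)`) and `y` of `Y` (realizing `[bY j, dY j)`). -/
def IsMatrixOf {K : Type u} [Field K] {X Y : PersistenceModule K} {ε : ℝ}
    {N M : ℕ} (α : EpsMorphism X Y ε)
    (bX dX : Fin N → ℝ) (x : ∀ i, X.space (bX i))
    (bY dY : Fin M → ℝ) (y : ∀ j, Y.space (bY j))
    (A : Matrix (Fin M) (Fin N) K) : Prop :=
  (∀ i, α.maps (bX i) (bX i + ε) rfl (x i)
      = ∑ j, A j i • Y.pushTo bY y (bX i + ε) j) ∧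
  (∀ (j : Fin M) (i : Fin N), ¬ (bY j ≤ bX i + ε ∧ bX i + ε < dY j) → A j i = 0)

/-- A basis transformation matrix. -/
def IsBasisTransformMatrix {K : Type u} [Field K] {N : ℕ} (b d : Fin N → ℝ)
    (A : Matrix (Fin N) (Fin N) K) : Prop :=
  (∀ i, A i i ≠ 0) ∧ ∀ j i, A j i ≠ 0 → b j ≤ b i ∧ d j ≤ d i

/-- The transformed family `A(B)`: `x_i^new = ∑ j A j i • φ(x_j)`. -/
noncomputable def transformBasis {K : Type u} [Field K] {N : ℕ} (X : PersistenceModule K)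
    (b : Fin N → ℝ) (x : ∀ i, X.space (b i)) (A : Matrix (Fin N) (Fin N) K)
    (i : Fin N) : X.space (b i) :=
  ∑ j, A j i • X.pushTo b x (b i) j

/-- The elementary matrix `e_{lk}^μ`: identity with extra entry `μ` in position `(k, l)`. -/
def eMat {K : Type u} [Field K] {N : ℕ} (l k : Fin N) (μ : K) : Matrix (Fin N) (Fin N) K :=
  1 + Matrix.single k l μ

/-- A `1`-Lipschitz vineyard module over `[t0, t1]`: a family of persistence modules together
with `|s - t|`-interleavings between the modules at times `s < t`, all of which commute with
each other and with the transition maps. -/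
structure VineyardModule.{u_1} (K : Type u) [Field K] (t0 t1 : ℝ) where
  M : ℝ → PersistenceModule.{u, u_1} K
  F : ∀ s t : ℝ, t0 ≤ s → s < t → t ≤ t1 → EpsMorphism (M s) (M t) (t - s)
  G : ∀ s t : ℝ, t0 ≤ s → s < t → t ≤ t1 → EpsMorphism (M t) (M s) (t - s)
  inter : ∀ (s t : ℝ) (h0 : t0 ≤ s) (hst : s < t) (h1 : t ≤ t1),
    IsInterleaving (M s) (M t) (t - s) (F s t h0 hst h1) (G s t h0 hst h1)
  Fcomp : ∀ (s t u : ℝ) (h0 : t0 ≤ s) (hst : s < t) (htu : t < u) (h1 : u ≤ t1)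
      (h0t : t0 ≤ t) (ht1 : t ≤ t1) (hsu : s < u)
      (r r' r'' : ℝ) (h : r + (t - s) = r') (h' : r' + (u - t) = r'')
      (h'' : r + (u - s) = r'') (xx : (M s).space r),
    (F t u h0t htu h1).maps r' r'' h' ((F s t h0 hst ht1).maps r r' h xx)
      = (F s u h0 hsu h1).maps r r'' h'' xx
  Gcomp : ∀ (s t u : ℝ) (h0 : t0 ≤ s) (hst : s < t) (htu : t < u) (h1 : u ≤ t1)
      (h0t : t0 ≤ t) (ht1 : t ≤ t1) (hsu : s < u)
      (r r' r'' : ℝ) (h : r + (u - t) = r') (h' : r' + (t - s) = r'')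
      (h'' : r + (u - s) = r'') (xx : (M u).space r),
    (G s t h0 hst ht1).maps r' r'' h' ((G t u h0t htu h1).maps r r' h xx)
      = (G s u h0 hsu h1).maps r r'' h'' xx
  mixedGF : ∀ (s t u : ℝ) (h0 : t0 ≤ s) (hst : s < t) (htu : t < u) (h1 : u ≤ t1)
      (h0t : t0 ≤ t) (ht1 : t ≤ t1) (hsu : s < u)
      (r r1 r2 r3 : ℝ) (hr1 : r + (u - s) = r1) (hr2 : r1 + (u - t) = r2)
      (hr3 : r + (t - s) = r3) (hle : r3 ≤ r2) (xx : (M s).space r),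
    (G t u h0t htu h1).maps r1 r2 hr2 ((F s u h0 hsu h1).maps r r1 hr1 xx)
      = (M t).trans r3 r2 hle ((F s t h0 hst ht1).maps r r3 hr3 xx)
  mixedFG : ∀ (s t u : ℝ) (h0 : t0 ≤ s) (hst : s < t) (htu : t < u) (h1 : u ≤ t1)
      (h0t : t0 ≤ t) (ht1 : t ≤ t1) (hsu : s < u)
      (r r1 r2 r3 : ℝ) (hr1 : r + (t - s) = r1) (hr2 : r1 + (u - s) = r2)
      (hr3 : r + (u - t) = r3) (hle : r3 ≤ r2) (xx : (M t).space r),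
    (F s u h0 hsu h1).maps r1 r2 hr2 ((G s t h0 hst ht1).maps r r1 hr1 xx)
      = (M u).trans r3 r2 hle ((F t u h0t htu h1).maps r r3 hr3 xx)

/-- A morphism of vineyard modules: a family of (`0`-)morphisms of persistence modules,
one for each time, commuting with all the interleaving maps. -/
structure VineyardMorphism {K : Type u} [Field K] {t0 t1 : ℝ}
    (V W : VineyardModule K t0 t1) where
  maps : ∀ t : ℝ, t0 ≤ t → t ≤ t1 → EpsMorphism (V.M t) (W.M t) 0
  commF : ∀ (s t : ℝ) (h0 : t0 ≤ s) (hst : s < t) (h1 : t ≤ t1) (h0t : t0 ≤ t)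
      (hs1 : s ≤ t1) (r r' : ℝ) (h : r + (t - s) = r') (xx : (V.M s).space r),
    (maps t h0t h1).maps r' r' (add_zero r') ((V.F s t h0 hst h1).maps r r' h xx)
      = (W.F s t h0 hst h1).maps r r' h ((maps s h0 hs1).maps r r (add_zero r) xx)
  commG : ∀ (s t : ℝ) (h0 : t0 ≤ s) (hst : s < t) (h1 : t ≤ t1) (h0t : t0 ≤ t)
      (hs1 : s ≤ t1) (r r' : ℝ) (h : r + (t - s) = r') (xx : (V.M t).space r),
    (maps s h0 hs1).maps r' r' (add_zero r') ((V.G s t h0 hst h1).maps r r' h xx)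
      = (W.G s t h0 hst h1).maps r r' h ((maps t h0t h1).maps r r (add_zero r) xx)

/-- `x` is an extended basis of `X` with support `S`: the elements indexed by `S` form a basis
of `X` realizing the intervals `[b i, d i)` (for `i ∈ S`), and the remaining elements are
zero. -/
def IsExtBasisFamily {K : Type u} [Field K] {ι : Type*} (X : PersistenceModule K)
    (S : Set ι) (b d : ι → ℝ) (x : ∀ i, X.space (b i)) : Prop :=
  (∀ i ∈ S, X.BornAt (b i) (x i)) ∧
  (∀ i ∈ S, X.death (b i) (x i) = d i) ∧
  (∀ i ∉ S, x i = 0) ∧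
  (∀ t : ℝ,
    LinearIndependent K (fun i : {i : ι // i ∈ S ∧ b i ≤ t ∧ t < d i} =>
      X.trans (b i.1) t i.2.2.1 (x i.1)) ∧
    Submodule.span K (Set.range fun i : {i : ι // i ∈ S ∧ b i ≤ t ∧ t < d i} =>
      X.trans (b i.1) t i.2.2.1 (x i.1)) = ⊤)

/-- `A` is the matrix of the `ε`-morphism `α` with respect to the extended bases `x` of `X`
(with support `SX`) and `y` of `Y` (with support `SY`); rows and columns at indices of zero
elements vanish. -/
def IsExtMatrixOf {K : Type u} [Field K] {X Y : PersistenceModule K} {ε : ℝ}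
    {ι : Type*} [Fintype ι] (α : EpsMorphism X Y ε)
    (SX : Set ι) (bX dX : ι → ℝ) (x : ∀ i, X.space (bX i))
    (SY : Set ι) (bY dY : ι → ℝ) (y : ∀ j, Y.space (bY j))
    (A : Matrix ι ι K) : Prop :=
  (∀ i, α.maps (bX i) (bX i + ε) rfl (x i)
      = ∑ j, A j i • Y.pushTo bY y (bX i + ε) j) ∧
  (∀ j i, ¬ (j ∈ SY ∧ bY j ≤ bX i + ε ∧ bX i + ε < dY j) → A j i = 0) ∧
  (∀ i ∉ SX, ∀ j, A j i = 0)

open scoped Classical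

/-!
At every height `r` the elements of the two extended bases alive at `r` form bases of
`V_t(r)` and `W_t(r)` indexed by the same set, and matching them gives a linear isomorphism
`ρ_t(r)`. Since an element of an extended basis vanishes from its death on, `ρ_t` carries the
image of every basis element of `V_t` at every height to the corresponding image in `W_t`.
Hence `ρ_t` commutes with the transition maps, and it commutes with the interleaving maps
because in these bases the interleaving maps of `V` and `W` are given by the same matrices.
-/

namespace PersistenceModule

variable {K : Type u} [Field K] {ι : Type*} (X : PersistenceModule K) (b : ι → ℝ)
  (x : ∀ i, X.space (b i))

theorem pushTo_of_le {h : ℝ} {j : ι} (hb : b j ≤ h) :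
    X.pushTo b x h j = X.trans (b j) h hb (x j) :=
  dif_pos hb

theorem pushTo_of_not_le {h : ℝ} {j : ι} (hb : ¬ b j ≤ h) : X.pushTo b x h j = 0 :=
  dif_neg hb

theorem pushTo_self (j : ι) : X.pushTo b x (b j) j = x j := by
  rw [pushTo_of_le X b x le_rfl, X.trans_self]
  rfl

theorem trans_pushTo {h h' : ℝ} {j : ι} (hb : b j ≤ h) (hh : h ≤ h') :
    X.trans h h' hh (X.pushTo b x h j) = X.pushTo b x h' j := by
  rw [pushTo_of_le X b x hb, pushTo_of_le X b x (hb.trans hh), X.trans_trans]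

end PersistenceModule

theorem exists_gt_forall_lt_of_lt {ι : Type*} [Finite ι] (d : ι → ℝ) (r : ℝ) :
    ∃ h, r < h ∧ ∀ j, r < d j → h < d j := by
  have : ∀ᶠ h in nhdsWithin r (Set.Ioi r), r < h ∧ ∀ j, r < d j → h < d j := by
    refine eventually_mem_nhdsWithin.and (Filter.eventually_all.2 fun j => ?_)
    by_cases hj : r < d j
    · filter_upwards [nhdsWithin_le_nhds (eventually_lt_nhds hj)] with h hh _ using hh
    · exact Filter.Eventually.of_forall fun _ hj' => absurd hj' hj
  exact this.exists

namespace EpsMorphism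

variable {K : Type u} [Field K] {X Y : PersistenceModule K}

-- `r'` is only propositionally `r + 0`, so `f r` is followed by the identity transition to `r'`.
def ofCommuting (f : ∀ r, X.space r →ₗ[K] Y.space r)
    (hf : ∀ r r' (h : r ≤ r') z, f r' (X.trans r r' h z) = Y.trans r r' h (f r z)) :
    EpsMorphism X Y 0 where
  maps r r' h := Y.trans r r' (by linarith) ∘ₗ f r
  comm s t s' t' hs ht hst z := by
    simp only [LinearMap.comp_apply]
    rw [hf, Y.trans_trans, Y.trans_trans]

variable (f : ∀ r, X.space r →ₗ[K] Y.space r)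
  (hf : ∀ r r' (h : r ≤ r') z, f r' (X.trans r r' h z) = Y.trans r r' h (f r z))

theorem ofCommuting_maps_self (r : ℝ) (h : r + 0 = r) (z : X.space r) :
    (ofCommuting f hf).maps r r h z = f r z := by
  change Y.trans r r _ (f r z) = f r z
  rw [Y.trans_self]
  rfl

theorem ofCommuting_bijective (hbij : ∀ r, Function.Bijective (f r)) {r r' : ℝ}
    (h : r + 0 = r') : Function.Bijective ((ofCommuting f hf).maps r r' h) := by
  obtain rfl : r = r' := by linarith
  convert hbij r using 1
  exact funext (ofCommuting_maps_self f hf r h)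

end EpsMorphism

namespace IsExtBasisFamily

open PersistenceModule

variable {K : Type u} [Field K] {ι : Type*} {X Y : PersistenceModule K} {S : Set ι}
  {b d : ι → ℝ} {x : ∀ i, X.space (b i)} {y : ∀ i, Y.space (b i)}

noncomputable def basisAt (hx : IsExtBasisFamily X S b d x) (r : ℝ) :
    Module.Basis {i : ι // i ∈ S ∧ b i ≤ r ∧ r < d i} K (X.space r) :=
  Module.Basis.mk (hx.2.2.2 r).1 (hx.2.2.2 r).2.ge

theorem basisAt_apply (hx : IsExtBasisFamily X S b d x) (r : ℝ)
    (j : {i : ι // i ∈ S ∧ b i ≤ r ∧ r < d i}) :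
    hx.basisAt r j = X.pushTo b x r j.1 := by
  rw [basisAt, Module.Basis.mk_apply, pushTo_of_le X b x j.2.2.1]

theorem subsingleton_space (hx : IsExtBasisFamily X S b d x) {H : ℝ}
    (hH : ∀ j ∈ S, d j ≤ H) : Subsingleton (X.space H) := by
  refine not_nontrivial_iff_subsingleton.1 fun _ => ?_
  obtain ⟨j⟩ := (hx.basisAt H).index_nonempty
  exact (hH j.1 j.2.1).not_gt j.2.2.2

-- So the set whose `sInf` defines `death` is nonempty, and `death` is not the junk value `0`.
theorem exists_trans_eq_zero [Finite ι] (hx : IsExtBasisFamily X S b d x) (i : ι) :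
    ∃ s, ∃ h : b i < s, X.trans (b i) s h.le (x i) = 0 := by
  obtain ⟨M, hM⟩ := (Set.finite_range d).bddAbove
  have hH : ∀ j ∈ S, d j ≤ max M (b i) + 1 := fun j _ => by
    linarith [hM (Set.mem_range_self j), le_max_left M (b i)]
  have := hx.subsingleton_space hH
  exact ⟨max M (b i) + 1, by linarith [le_max_right M (b i)], Subsingleton.elim _ _⟩

theorem trans_eq_zero_of_death_lt [Finite ι] (hx : IsExtBasisFamily X S b d x) {i : ι}
    (hi : i ∈ S) {h : ℝ} (hbh : b i ≤ h) (hdh : d i < h) :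
    X.trans (b i) h hbh (x i) = 0 := by
  rw [← hx.2.1 i hi, death] at hdh
  obtain ⟨s, ⟨hbs, hs⟩, hsh⟩ := exists_lt_of_csInf_lt (hx.exists_trans_eq_zero i) hdh
  rw [← X.trans_trans _ s _ hbs.le hsh.le, hs, map_zero]

theorem trans_injective (hx : IsExtBasisFamily X S b d x) {r h : ℝ} (hrh : r ≤ h)
    (hd : ∀ j ∈ S, b j ≤ r → r < d j → h < d j) : Function.Injective (X.trans r h hrh) := by
  let extend (j : {i : ι // i ∈ S ∧ b i ≤ r ∧ r < d i}) :
      {i : ι // i ∈ S ∧ b i ≤ h ∧ h < d i} :=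
    ⟨j.1, j.2.1, j.2.2.1.trans hrh, hd j.1 j.2.1 j.2.2.1 j.2.2.2⟩
  have hext : Function.Injective extend := fun j k hjk =>
    Subtype.ext (congrArg Subtype.val hjk :)
  refine LinearMap.injective_of_linearIndependent (hx.basisAt r).span_eq ?_
  have hfamily : X.trans r h hrh ∘ hx.basisAt r
      = (fun j : {i : ι // i ∈ S ∧ b i ≤ h ∧ h < d i} => X.trans (b j.1) h j.2.2.1 (x j.1))
        ∘ extend := by
    funext j
    simp only [Function.comp_apply, basisAt_apply, trans_pushTo X b x j.2.2.1,
      pushTo_of_le X b x (j.2.2.1.trans hrh), extend]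
  rw [hfamily]
  exact (hx.2.2.2 h).1.comp extend hext

/-- At `h = d i` itself, move on to a slightly larger height: no element alive at `d i` dies
in between, so the transition map there is injective. -/
theorem trans_eq_zero_of_death_le [Finite ι] (hx : IsExtBasisFamily X S b d x) {i : ι}
    (hi : i ∈ S) {h : ℝ} (hbh : b i ≤ h) (hdh : d i ≤ h) :
    X.trans (b i) h hbh (x i) = 0 := by
  rcases hdh.lt_or_eq with hlt | rfl
  · exact hx.trans_eq_zero_of_death_lt hi hbh hlt
  obtain ⟨h', hdh', hh'⟩ := exists_gt_forall_lt_of_lt d (d i)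
  refine hx.trans_injective hdh'.le (fun j _ _ hj => hh' j hj) ?_
  rw [X.trans_trans, map_zero]
  exact hx.trans_eq_zero_of_death_lt hi _ hdh'

theorem birth_lt_death [Finite ι] (hx : IsExtBasisFamily X S b d x) {i : ι} (hi : i ∈ S) :
    b i < d i := by
  by_contra! hdb
  have hxi : x i = 0 := by
    simpa [X.trans_self] using hx.trans_eq_zero_of_death_le hi le_rfl hdb
  exact hx.1 i hi (b i - 1) (by linarith) ⟨0, by rw [hxi, map_zero]⟩

theorem pushTo_eq_zero [Finite ι] (hx : IsExtBasisFamily X S b d x) {h : ℝ} {j : ι}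
    (hj : ¬ (j ∈ S ∧ b j ≤ h ∧ h < d j)) : X.pushTo b x h j = 0 := by
  by_cases hb : b j ≤ h
  · rw [pushTo_of_le X b x hb]
    by_cases hjS : j ∈ S
    · exact hx.trans_eq_zero_of_death_le hjS hb (not_lt.1 fun hd => hj ⟨hjS, hb, hd⟩)
    · rw [hx.2.2.1 j hjS, map_zero]
  · exact pushTo_of_not_le X b x hb

noncomputable def matchingEquiv (hx : IsExtBasisFamily X S b d x)
    (hy : IsExtBasisFamily Y S b d y) (r : ℝ) : X.space r ≃ₗ[K] Y.space r :=
  (hx.basisAt r).equiv (hy.basisAt r) (Equiv.refl _)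

variable [Finite ι] (hx : IsExtBasisFamily X S b d x) (hy : IsExtBasisFamily Y S b d y)

theorem matchingEquiv_pushTo (r : ℝ) (j : ι) :
    hx.matchingEquiv hy r (X.pushTo b x r j) = Y.pushTo b y r j := by
  by_cases hj : j ∈ S ∧ b j ≤ r ∧ r < d j
  · rw [← hx.basisAt_apply r ⟨j, hj⟩, matchingEquiv, Module.Basis.equiv_apply,
      Equiv.refl_apply, basisAt_apply]
  · rw [hx.pushTo_eq_zero hj, hy.pushTo_eq_zero hj, map_zero]

theorem matchingEquiv_trans {r r' : ℝ} (hrr : r ≤ r') (z : X.space r) :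
    hx.matchingEquiv hy r' (X.trans r r' hrr z)
      = Y.trans r r' hrr (hx.matchingEquiv hy r z) := by
  suffices (hx.matchingEquiv hy r').toLinearMap ∘ₗ X.trans r r' hrr
      = Y.trans r r' hrr ∘ₗ (hx.matchingEquiv hy r).toLinearMap from
    LinearMap.congr_fun this z
  refine (hx.basisAt r).ext fun j => ?_
  simp only [LinearMap.comp_apply, LinearEquiv.coe_coe, basisAt_apply]
  rw [trans_pushTo X b x j.2.2.1, matchingEquiv_pushTo, matchingEquiv_pushTo,
    trans_pushTo Y b y j.2.2.1]

noncomputable def matchingMorphism : EpsMorphism X Y 0 :=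
  EpsMorphism.ofCommuting (fun r => (hx.matchingEquiv hy r).toLinearMap)
    (fun _ _ hrr z => hx.matchingEquiv_trans hy hrr z)

theorem matchingMorphism_maps_self (r : ℝ) (h : r + 0 = r) (z : X.space r) :
    (hx.matchingMorphism hy).maps r r h z = hx.matchingEquiv hy r z :=
  EpsMorphism.ofCommuting_maps_self _ _ r h z

theorem matchingMorphism_bijective {r r' : ℝ} (h : r + 0 = r') :
    Function.Bijective ((hx.matchingMorphism hy).maps r r' h) :=
  EpsMorphism.ofCommuting_bijective _ _ (fun r => (hx.matchingEquiv hy r).bijective) h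

theorem isExtMatrixOf_matchingMorphism [Fintype ι] [DecidableEq ι] :
    IsExtMatrixOf (hx.matchingMorphism hy) S b d x S b d y
      (Matrix.diagonal fun i => if i ∈ S then (1 : K) else 0) := by
  refine ⟨fun i => ?_, fun j i hji => ?_, fun i hi j => ?_⟩
  · have hxi : (hx.matchingMorphism hy).maps (b i) (b i + 0) rfl (x i)
        = Y.pushTo b y (b i + 0) i := by
      change Y.trans _ _ _ (hx.matchingEquiv hy (b i) (x i)) = _
      rw [← X.pushTo_self b x i, matchingEquiv_pushTo, trans_pushTo Y b y le_rfl]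
    rw [hxi, Finset.sum_eq_single i
      (fun j _ hji => by rw [Matrix.diagonal_apply_ne _ hji, zero_smul]) (by simp),
      Matrix.diagonal_apply_eq]
    split_ifs with hi
    · rw [one_smul]
    · rw [zero_smul, hy.pushTo_eq_zero fun h => hi h.1]
  · obtain rfl | hji' := eq_or_ne j i
    · rw [Matrix.diagonal_apply_eq,
        if_neg fun hj => hji ⟨hj, by simp, by simpa using hx.birth_lt_death hj⟩]
    · exact Matrix.diagonal_apply_ne _ hji'
  · obtain rfl | hji := eq_or_ne j i
    · simp [hi]
    · exact Matrix.diagonal_apply_ne _ hji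

end IsExtBasisFamily

namespace IsExtMatrixOf

open PersistenceModule

variable {K : Type u} [Field K] {ι : Type*} [Fintype ι] {ε : ℝ}

theorem maps_pushTo {X Y : PersistenceModule K} {α : EpsMorphism X Y ε}
    {SX SY : Set ι} {bX dX bY dY : ι → ℝ} {x : ∀ i, X.space (bX i)}
    {y : ∀ j, Y.space (bY j)} {A : Matrix ι ι K}
    (hA : IsExtMatrixOf α SX bX dX x SY bY dY y A) (i : ι) {r r' : ℝ} (hbr : bX i ≤ r)
    (h : r + ε = r') :
    α.maps r r' h (X.pushTo bX x r i) = ∑ j, A j i • Y.pushTo bY y r' j := by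
  rw [pushTo_of_le X bX x hbr, α.comm (bX i) r (bX i + ε) r' rfl h hbr (x i), hA.1 i, map_sum]
  refine Finset.sum_congr rfl fun j _ => ?_
  rw [map_smul]
  by_cases hAji : A j i = 0
  · rw [hAji, zero_smul, zero_smul]
  · have hj := not_imp_comm.1 (hA.2.1 j i) hAji
    rw [trans_pushTo Y bY y hj.2.1]

theorem matchingEquiv_maps_comm {X₁ Y₁ X₂ Y₂ : PersistenceModule K} {S₁ S₂ : Set ι}
    {b₁ d₁ b₂ d₂ : ι → ℝ} {x₁ : ∀ i, X₁.space (b₁ i)} {y₁ : ∀ i, Y₁.space (b₁ i)}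
    {x₂ : ∀ i, X₂.space (b₂ i)} {y₂ : ∀ i, Y₂.space (b₂ i)}
    (hx₁ : IsExtBasisFamily X₁ S₁ b₁ d₁ x₁) (hy₁ : IsExtBasisFamily Y₁ S₁ b₁ d₁ y₁)
    (hx₂ : IsExtBasisFamily X₂ S₂ b₂ d₂ x₂) (hy₂ : IsExtBasisFamily Y₂ S₂ b₂ d₂ y₂)
    {αX : EpsMorphism X₁ X₂ ε} {αY : EpsMorphism Y₁ Y₂ ε} {A : Matrix ι ι K}
    (hAX : IsExtMatrixOf αX S₁ b₁ d₁ x₁ S₂ b₂ d₂ x₂ A)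
    (hAY : IsExtMatrixOf αY S₁ b₁ d₁ y₁ S₂ b₂ d₂ y₂ A)
    {r r' : ℝ} (h : r + ε = r') (z : X₁.space r) :
    hx₂.matchingEquiv hy₂ r' (αX.maps r r' h z)
      = αY.maps r r' h (hx₁.matchingEquiv hy₁ r z) := by
  suffices (hx₂.matchingEquiv hy₂ r').toLinearMap ∘ₗ αX.maps r r' h
      = αY.maps r r' h ∘ₗ (hx₁.matchingEquiv hy₁ r).toLinearMap from
    LinearMap.congr_fun this z
  refine (hx₁.basisAt r).ext fun j => ?_
  simp only [LinearMap.comp_apply, LinearEquiv.coe_coe, IsExtBasisFamily.basisAt_apply]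
  rw [hAX.maps_pushTo j.1 j.2.2.1 h, hx₁.matchingEquiv_pushTo, hAY.maps_pushTo j.1 j.2.2.1 h,
    map_sum]
  simp only [map_smul, hx₂.matchingEquiv_pushTo hy₂]

end IsExtMatrixOf

theorem statement10_general {K : Type u} [Field K] {t0 t1 : ℝ} {N : ℕ}
    (V W : VineyardModule K t0 t1)
    (S : ℝ → Set (Fin N)) (b d : Fin N → ℝ → ℝ)
    (xV : ∀ t : ℝ, ∀ i, (V.M t).space (b i t))
    (xW : ∀ t : ℝ, ∀ i, (W.M t).space (b i t))
    (hV : ∀ t ∈ Set.Icc t0 t1,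
      IsExtBasisFamily (V.M t) (S t) (fun i => b i t) (fun i => d i t) (xV t))
    (hW : ∀ t ∈ Set.Icc t0 t1,
      IsExtBasisFamily (W.M t) (S t) (fun i => b i t) (fun i => d i t) (xW t))
    (hα : ∀ (s t : ℝ) (h0 : t0 ≤ s) (hst : s < t) (h1 : t ≤ t1),
      ∃ A : Matrix (Fin N) (Fin N) K,
        IsExtMatrixOf (V.F s t h0 hst h1)
          (S s) (fun i => b i s) (fun i => d i s) (xV s)
          (S t) (fun i => b i t) (fun i => d i t) (xV t) A ∧
        IsExtMatrixOf (W.F s t h0 hst h1)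
          (S s) (fun i => b i s) (fun i => d i s) (xW s)
          (S t) (fun i => b i t) (fun i => d i t) (xW t) A)
    (hβ : ∀ (s t : ℝ) (h0 : t0 ≤ s) (hst : s < t) (h1 : t ≤ t1),
      ∃ B : Matrix (Fin N) (Fin N) K,
        IsExtMatrixOf (V.G s t h0 hst h1)
          (S t) (fun i => b i t) (fun i => d i t) (xV t)
          (S s) (fun i => b i s) (fun i => d i s) (xV s) B ∧
        IsExtMatrixOf (W.G s t h0 hst h1)
          (S t) (fun i => b i t) (fun i => d i t) (xW t)
          (S s) (fun i => b i s) (fun i => d i s) (xW s) B) :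
    ∃ ρ : VineyardMorphism V W,
      (∀ (t : ℝ) (h0 : t0 ≤ t) (h1 : t ≤ t1) (r r' : ℝ) (h : r + 0 = r'),
        Function.Bijective ((ρ.maps t h0 h1).maps r r' h)) ∧
      (∀ (t : ℝ) (h0 : t0 ≤ t) (h1 : t ≤ t1),
        IsExtMatrixOf (ρ.maps t h0 h1)
          (S t) (fun i => b i t) (fun i => d i t) (xV t)
          (S t) (fun i => b i t) (fun i => d i t) (xW t)
          (Matrix.diagonal fun i => if i ∈ S t then (1 : K) else 0)) := by
  refine ⟨⟨fun t h0 h1 => (hV t ⟨h0, h1⟩).matchingMorphism (hW t ⟨h0, h1⟩), ?_, ?_⟩,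
    fun t h0 h1 _ _ h => (hV t ⟨h0, h1⟩).matchingMorphism_bijective _ h,
    fun t h0 h1 => (hV t ⟨h0, h1⟩).isExtMatrixOf_matchingMorphism _⟩
  · intro s t h0 hst h1 h0t hs1 r r' h z
    obtain ⟨A, hAV, hAW⟩ := hα s t h0 hst h1
    simp only [IsExtBasisFamily.matchingMorphism_maps_self]
    exact hAV.matchingEquiv_maps_comm _ _ _ _ hAW h z
  · intro s t h0 hst h1 h0t hs1 r r' h z
    obtain ⟨B, hBV, hBW⟩ := hβ s t h0 hst h1
    simp only [IsExtBasisFamily.matchingMorphism_maps_self]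
    exact hBV.matchingEquiv_maps_comm _ _ _ _ hBW h z

/-- Two vineyard modules admitting families of extended bases (with the same
supports, births and deaths) with respect to which all the interleaving matrices agree are
isomorphic: the family of maps `ρ_t` whose matrix is the projection `π_{S_t}` is an invertible
morphism of vineyard modules. -/
theorem statement10 {K : Type u} [Field K] {t0 t1 : ℝ} (ht01 : t0 ≤ t1) {N : ℕ}
    (V W : VineyardModule K t0 t1)
    (S : ℝ → Set (Fin N)) (b d : Fin N → ℝ → ℝ)
    (hbd : ∀ t ∈ Set.Icc t0 t1, ∀ i ∈ S t, b i t < d i t)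
    (xV : ∀ t : ℝ, ∀ i, (V.M t).space (b i t))
    (xW : ∀ t : ℝ, ∀ i, (W.M t).space (b i t))
    (hV : ∀ t ∈ Set.Icc t0 t1,
      IsExtBasisFamily (V.M t) (S t) (fun i => b i t) (fun i => d i t) (xV t))
    (hW : ∀ t ∈ Set.Icc t0 t1,
      IsExtBasisFamily (W.M t) (S t) (fun i => b i t) (fun i => d i t) (xW t))
    (hα : ∀ (s t : ℝ) (h0 : t0 ≤ s) (hst : s < t) (h1 : t ≤ t1),
      ∃ A : Matrix (Fin N) (Fin N) K,
        IsExtMatrixOf (V.F s t h0 hst h1)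
          (S s) (fun i => b i s) (fun i => d i s) (xV s)
          (S t) (fun i => b i t) (fun i => d i t) (xV t) A ∧
        IsExtMatrixOf (W.F s t h0 hst h1)
          (S s) (fun i => b i s) (fun i => d i s) (xW s)
          (S t) (fun i => b i t) (fun i => d i t) (xW t) A)
    (hβ : ∀ (s t : ℝ) (h0 : t0 ≤ s) (hst : s < t) (h1 : t ≤ t1),
      ∃ B : Matrix (Fin N) (Fin N) K,
        IsExtMatrixOf (V.G s t h0 hst h1)
          (S t) (fun i => b i t) (fun i => d i t) (xV t)
          (S s) (fun i => b i s) (fun i => d i s) (xV s) B ∧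
        IsExtMatrixOf (W.G s t h0 hst h1)
          (S t) (fun i => b i t) (fun i => d i t) (xW t)
          (S s) (fun i => b i s) (fun i => d i s) (xW s) B) :
    ∃ ρ : VineyardMorphism V W,
      (∀ (t : ℝ) (h0 : t0 ≤ t) (h1 : t ≤ t1) (r r' : ℝ) (h : r + 0 = r'),
        Function.Bijective ((ρ.maps t h0 h1).maps r r' h)) ∧
      (∀ (t : ℝ) (h0 : t0 ≤ t) (h1 : t ≤ t1),
        IsExtMatrixOf (ρ.maps t h0 h1)
          (S t) (fun i => b i t) (fun i => d i t) (xV t)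
          (S t) (fun i => b i t) (fun i => d i t) (xW t)
          (Matrix.diagonal fun i => if i ∈ S t then (1 : K) else 0)) :=
  statement10_general V W S b d xV xW hV hW hα hβ
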